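/- Let P be an odd integer and Q a positive integer with gcd(P,Q) = 1, and let M be the 4Q-dimensional matrix of the restricted CW walk. Then each of the four complex numbers 1, −1, i, −i is an eigenvalue of M. -/

import Mathlib

open Real Matrix

/-- The index set `I = {(n,ξ) : -Q ≤ n ≤ Q, ξ ∈ {L,R}} \ {(-Q,L),(Q,R)}` of the
restricted `CW` walk, where `false` stands for `L` and `true` for `R`. -/
def Idx (Q : ℤ) : Type :=
  {p : (Finset.Icc (-Q) Q : Finset ℤ) × Bool //
    ¬((p.1 : ℤ) = -Q ∧ p.2 = false) ∧ ¬((p.1 : ℤ) = Q ∧ p.2 = true)}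

noncomputable instance (Q : ℤ) : Fintype (Idx Q) := by unfold Idx; infer_instance
instance (Q : ℤ) : DecidableEq (Idx Q) := by unfold Idx; infer_instance

/-- The `4Q × 4Q` matrix `M = 𝖢𝖶` of the restricted `CW` walk, with
`(Mv)(n,L) = cos θₙ · ṽ(n+1,L) - sin θₙ · ṽ(n-1,R)` and
`(Mv)(n,R) = sin θₙ · ṽ(n+1,L) + cos θₙ · ṽ(n-1,R)`, where `θₙ = πPn/(2Q)`. -/
noncomputable def Mmat (P Q : ℤ) : Matrix (Idx Q) (Idx Q) ℂ := fun i j =>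
  if i.1.2 = false then
    (if (j.1.1 : ℤ) = (i.1.1 : ℤ) + 1 ∧ j.1.2 = false then
      (Real.cos (π * (P : ℝ) * ((i.1.1 : ℤ) : ℝ) / (2 * (Q : ℝ))) : ℂ) else 0) +
    (if (j.1.1 : ℤ) = (i.1.1 : ℤ) - 1 ∧ j.1.2 = true then
      -(Real.sin (π * (P : ℝ) * ((i.1.1 : ℤ) : ℝ) / (2 * (Q : ℝ))) : ℂ) else 0)
  else
    (if (j.1.1 : ℤ) = (i.1.1 : ℤ) + 1 ∧ j.1.2 = false then
      (Real.sin (π * (P : ℝ) * ((i.1.1 : ℤ) : ℝ) / (2 * (Q : ℝ))) : ℂ) else 0) +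
    (if (j.1.1 : ℤ) = (i.1.1 : ℤ) - 1 ∧ j.1.2 = true then
      (Real.cos (π * (P : ℝ) * ((i.1.1 : ℤ) : ℝ) / (2 * (Q : ℝ))) : ℂ) else 0)

/- ### auxiliary definitions -/

noncomputable def thA (P Q n : ℤ) : ℝ := π * (P : ℝ) * (n : ℝ) / (2 * (Q : ℝ))
noncomputable def ccA (P Q n : ℤ) : ℂ := ((Real.cos (thA P Q n) : ℝ) : ℂ)
noncomputable def ssA (P Q n : ℤ) : ℂ := ((Real.sin (thA P Q n) : ℝ) : ℂ)
noncomputable def epsA (P Q : ℤ) (lam : ℂ) (n : ℤ) : ℂ :=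
  ssA P Q (-Q) * lam ^ 3 * (lam ^ 2) ^ (Q + n).toNat
noncomputable def coefA (P Q : ℤ) (lam : ℂ) (n : ℤ) : ℂ :=
  (lam + epsA P Q lam (n - 1) * ssA P Q n) / ccA P Q n
noncomputable def avec (P Q : ℤ) (lam : ℂ) : ℕ → ℂ
  | 0 => 0
  | 1 => 1
  | (k + 2) => coefA P Q lam ((k : ℤ) + 1 - Q) * avec P Q lam (k + 1)
noncomputable def aInt (P Q : ℤ) (lam : ℂ) (n : ℤ) : ℂ := avec P Q lam (Q + n).toNat
noncomputable def vvA (P Q : ℤ) (lam : ℂ) : Idx Q → ℂ := fun i =>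
  if i.1.2 then epsA P Q lam (i.1.1 : ℤ) * aInt P Q lam ((i.1.1 : ℤ) + 1)
  else aInt P Q lam (i.1.1 : ℤ)
noncomputable def extA (Q : ℤ) (v : Idx Q → ℂ) (n : ℤ) (b : Bool) : ℂ :=
  if h : (n ∈ Finset.Icc (-Q) Q) ∧ ¬(n = -Q ∧ b = false) ∧ ¬(n = Q ∧ b = true)
  then v ⟨⟨⟨n, h.1⟩, b⟩, h.2⟩ else 0

/- ### the sum computation -/

lemma sum_ite_ext (Q : ℤ) (v : Idx Q → ℂ) (x : ℂ) (n : ℤ) (b : Bool) :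
    (∑ j : Idx Q, (if (j.1.1 : ℤ) = n ∧ j.1.2 = b then x else 0) * v j)
      = x * extA Q v n b := by
  by_cases h : (n ∈ Finset.Icc (-Q) Q) ∧ ¬(n = -Q ∧ b = false) ∧ ¬(n = Q ∧ b = true)
  · rw [extA, dif_pos h]
    set j0 : Idx Q := ⟨⟨⟨n, h.1⟩, b⟩, h.2⟩ with hj0
    rw [Finset.sum_eq_single_of_mem j0 (Finset.mem_univ _)]
    · rw [if_pos ⟨rfl, rfl⟩]
    · intro j _ hne
      rw [if_neg, zero_mul]
      rintro ⟨h1, h2⟩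
      apply hne
      apply Subtype.ext
      have : j.1.1 = (⟨n, h.1⟩ : (Finset.Icc (-Q) Q : Finset ℤ)) := Subtype.ext h1
      calc j.1 = (j.1.1, j.1.2) := rfl
        _ = j0.1 := by rw [this, h2]
  · rw [extA, dif_neg h, mul_zero]
    apply Finset.sum_eq_zero
    intro j _
    rw [if_neg, zero_mul]
    rintro ⟨h1, h2⟩
    exact h ⟨h1 ▸ j.1.1.2, h2 ▸ h1 ▸ j.2⟩

lemma mulVec_eq (P Q : ℤ) (v : Idx Q → ℂ) (i : Idx Q) :
    (Mmat P Q).mulVec v i =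
      if i.1.2 = false then
        ccA P Q (i.1.1 : ℤ) * extA Q v ((i.1.1 : ℤ) + 1) false
          - ssA P Q (i.1.1 : ℤ) * extA Q v ((i.1.1 : ℤ) - 1) true
      else
        ssA P Q (i.1.1 : ℤ) * extA Q v ((i.1.1 : ℤ) + 1) false
          + ccA P Q (i.1.1 : ℤ) * extA Q v ((i.1.1 : ℤ) - 1) true := by
  rw [Matrix.mulVec, dotProduct]
  by_cases hb : i.1.2 = false
  · simp only [Mmat, if_pos hb]
    rw [show (∑ j : Idx Q, ((if (j.1.1 : ℤ) = (i.1.1 : ℤ) + 1 ∧ j.1.2 = false then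
        (Real.cos (π * (P : ℝ) * ((i.1.1 : ℤ) : ℝ) / (2 * (Q : ℝ))) : ℂ) else 0) +
      (if (j.1.1 : ℤ) = (i.1.1 : ℤ) - 1 ∧ j.1.2 = true then
        -(Real.sin (π * (P : ℝ) * ((i.1.1 : ℤ) : ℝ) / (2 * (Q : ℝ))) : ℂ) else 0)) * v j)
      = (∑ j : Idx Q, (if (j.1.1 : ℤ) = (i.1.1 : ℤ) + 1 ∧ j.1.2 = false then
          ccA P Q (i.1.1 : ℤ) else 0) * v j)
        + (∑ j : Idx Q, (if (j.1.1 : ℤ) = (i.1.1 : ℤ) - 1 ∧ j.1.2 = true then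
          -(ssA P Q (i.1.1 : ℤ)) else 0) * v j) from by
        rw [← Finset.sum_add_distrib]; exact Finset.sum_congr rfl fun j _ => by
          rw [← add_mul]; rfl]
    rw [sum_ite_ext, sum_ite_ext]
    ring
  · simp only [Mmat, if_neg hb]
    rw [show (∑ j : Idx Q, ((if (j.1.1 : ℤ) = (i.1.1 : ℤ) + 1 ∧ j.1.2 = false then
        (Real.sin (π * (P : ℝ) * ((i.1.1 : ℤ) : ℝ) / (2 * (Q : ℝ))) : ℂ) else 0) +
      (if (j.1.1 : ℤ) = (i.1.1 : ℤ) - 1 ∧ j.1.2 = true then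
        (Real.cos (π * (P : ℝ) * ((i.1.1 : ℤ) : ℝ) / (2 * (Q : ℝ))) : ℂ) else 0)) * v j)
      = (∑ j : Idx Q, (if (j.1.1 : ℤ) = (i.1.1 : ℤ) + 1 ∧ j.1.2 = false then
          ssA P Q (i.1.1 : ℤ) else 0) * v j)
        + (∑ j : Idx Q, (if (j.1.1 : ℤ) = (i.1.1 : ℤ) - 1 ∧ j.1.2 = true then
          ccA P Q (i.1.1 : ℤ) else 0) * v j) from by
        rw [← Finset.sum_add_distrib]; exact Finset.sum_congr rfl fun j _ => by
          rw [← add_mul]; rfl]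
    rw [sum_ite_ext, sum_ite_ext]

/- ### trigonometric facts -/

lemma cc_Q_eq (P Q : ℤ) (hP : Odd P) (hQ : 0 < Q) : ccA P Q Q = 0 := by
  obtain ⟨m, hm⟩ := hP
  have hQ' : (Q : ℝ) ≠ 0 := Int.cast_ne_zero.mpr hQ.ne'
  have : thA P Q Q = (2 * (m : ℝ) + 1) * π / 2 := by
    rw [thA, hm]; push_cast; field_simp
  rw [ccA, this]
  have h0 : Real.cos ((2 * (m : ℝ) + 1) * π / 2) = 0 :=
    Real.cos_eq_zero_iff.mpr ⟨m, by push_cast; ring⟩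
  rw [h0]; norm_num

lemma th_neg (P Q : ℤ) (n : ℤ) : thA P Q (-n) = -thA P Q n := by
  rw [thA, thA]; push_cast; ring

lemma cc_negQ_eq (P Q : ℤ) (hP : Odd P) (hQ : 0 < Q) : ccA P Q (-Q) = 0 := by
  have := cc_Q_eq P Q hP hQ
  rw [ccA, th_neg, Real.cos_neg]; rw [ccA] at this; exact this

lemma ss_Q_eq (P Q : ℤ) : ssA P Q Q = -ssA P Q (-Q) := by
  rw [ssA, ssA, th_neg, Real.sin_neg]; push_cast; ring

lemma pyth (P Q n : ℤ) : ssA P Q n ^ 2 + ccA P Q n ^ 2 = 1 := by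
  rw [ssA, ccA]
  norm_cast
  exact_mod_cast Real.sin_sq_add_cos_sq (thA P Q n)

lemma s_sq (P Q : ℤ) (hP : Odd P) (hQ : 0 < Q) : ssA P Q (-Q) ^ 2 = 1 := by
  have h := pyth P Q (-Q)
  rw [cc_negQ_eq P Q hP hQ] at h
  linear_combination h

lemma cc_ne (P Q : ℤ) (hQ : 0 < Q) (hgcd : Int.gcd P Q = 1) (n : ℤ)
    (h1 : -Q < n) (h2 : n < Q) : ccA P Q n ≠ 0 := by
  rw [ccA, Complex.ofReal_ne_zero]
  intro hc
  obtain ⟨k, hk⟩ := Real.cos_eq_zero_iff.mp hc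
  rw [thA] at hk
  have hQ' : (Q : ℝ) ≠ 0 := Int.cast_ne_zero.mpr hQ.ne'
  have hπ : (π : ℝ) ≠ 0 := Real.pi_ne_zero
  have hr : ((P * n : ℤ) : ℝ) = (((2 * k + 1) * Q : ℤ) : ℝ) := by
    push_cast
    field_simp at hk
    have hk2 : π * ((P : ℝ) * n * 2) = π * ((2 * (k : ℝ) + 1) * (2 * Q)) := by
      linear_combination (2 * π) * hk
    have hk3 := mul_left_cancel₀ hπ hk2
    linarith
  have hz : P * n = (2 * k + 1) * Q := Int.cast_injective hr
  have hdvd : Q ∣ P * n := ⟨2 * k + 1, by linarith [hz]⟩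
  have hco : IsCoprime (Q : ℤ) P := (Int.isCoprime_iff_gcd_eq_one.mpr hgcd).symm
  have hn : Q ∣ n := hco.dvd_of_dvd_mul_left hdvd
  obtain ⟨c, rfl⟩ := hn
  have hc1 : c < 1 := lt_of_mul_lt_mul_left (by linarith [h2]) hQ.le
  have hc2 : -1 < c := lt_of_mul_lt_mul_left (by linarith [h1]) hQ.le
  have : c = 0 := by omega
  subst this
  have h0 : (2 * k + 1) * Q = 0 := by linear_combination -hz
  rcases mul_eq_zero.mp h0 with h | h
  · omega
  · omega

/- ### eps facts -/

section epsfacts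
variable (P Q : ℤ) (lam : ℂ) (hl : lam ^ 4 = 1)

lemma eps_step (n : ℤ) (hn : -Q + 1 ≤ n) :
    epsA P Q lam n = lam ^ 2 * epsA P Q lam (n - 1) := by
  have h1 : (Q + n).toNat = (Q + (n - 1)).toNat + 1 := by omega
  rw [epsA, epsA, h1, pow_succ]
  ring

include hl in
lemma eps_mul (hs : ssA P Q (-Q) ^ 2 = 1) (n : ℤ) (hn : -Q + 1 ≤ n) :
    epsA P Q lam n * epsA P Q lam (n - 1) = 1 := by
  have h1 : (Q + n).toNat = (Q + (n - 1)).toNat + 1 := by omega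
  rw [epsA, epsA, h1, pow_succ]
  set t := (lam ^ 2) ^ (Q + (n - 1)).toNat with ht
  have ht2 : t ^ 2 = 1 := by
    rw [ht, ← pow_mul, mul_comm ((Q + (n - 1)).toNat) 2, pow_mul,
      show (lam ^ 2) ^ 2 = lam ^ 4 by ring, hl, one_pow]
  linear_combination (lam ^ 8 * t ^ 2) * hs + lam ^ 8 * ht2 + (lam ^ 4 + 1) * hl

lemma eps_negQ : epsA P Q lam (-Q) = ssA P Q (-Q) * lam ^ 3 := by
  rw [epsA, show (Q + -Q).toNat = 0 by omega, pow_zero, mul_one]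

include hl in
lemma eps_Qsub1 (hQ : 0 < Q) : epsA P Q lam (Q - 1) = ssA P Q (-Q) * lam := by
  obtain ⟨q, hq⟩ : ∃ q : ℕ, (Q + (Q - 1)).toNat = 2 * q + 1 := ⟨(Q - 1).toNat, by omega⟩
  rw [epsA, hq]
  have e1 : (lam ^ 2) ^ (2 * q + 1) = ((lam ^ 2) ^ 2) ^ q * lam ^ 2 := by
    rw [pow_succ, pow_mul]
  have e2 : (lam ^ 2) ^ 2 = lam ^ 4 := by ring
  rw [e1, e2, hl, one_pow, one_mul]
  linear_combination (ssA P Q (-Q) * lam) * hl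

end epsfacts

/- ### the recursion -/

lemma arec (P Q : ℤ) (lam : ℂ) (hQ : 0 < Q) (hgcd : Int.gcd P Q = 1) (n : ℤ)
    (h1 : -Q + 1 ≤ n) (h2 : n ≤ Q - 1) :
    ccA P Q n * aInt P Q lam (n + 1)
      = (lam + epsA P Q lam (n - 1) * ssA P Q n) * aInt P Q lam n := by
  have hcne := cc_ne P Q hQ hgcd n (by omega) (by omega)
  obtain ⟨m, hm⟩ : ∃ m : ℕ, Q + n = (m : ℤ) + 1 := ⟨(Q + n - 1).toNat, by omega⟩
  rw [aInt, aInt, show (Q + (n + 1)).toNat = m + 2 by omega,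
    show (Q + n).toNat = m + 1 by omega]
  rw [show avec P Q lam (m + 2) = coefA P Q lam ((m : ℤ) + 1 - Q) * avec P Q lam (m + 1)
    from rfl]
  rw [show ((m : ℤ) + 1 - Q) = n by omega, coefA]
  field_simp

/- ### evaluating the extension of vvA -/

lemma ext_false (P Q : ℤ) (lam : ℂ) (n : ℤ) (h1 : -Q ≤ n) (h2 : n ≤ Q) :
    extA Q (vvA P Q lam) n false = aInt P Q lam n := by
  by_cases hn : n = -Q
  · subst hn
    rw [extA, dif_neg (by simp)]
    rw [aInt, show (Q + -Q).toNat = 0 by omega]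
    rfl
  · rw [extA, dif_pos ⟨Finset.mem_Icc.mpr ⟨h1, h2⟩, fun h => hn h.1,
      fun h => by simpa using h.2⟩]
    rfl

lemma ext_true (P Q : ℤ) (lam : ℂ) (n : ℤ) (h1 : -Q ≤ n) (h2 : n ≤ Q - 1) :
    extA Q (vvA P Q lam) n true = epsA P Q lam n * aInt P Q lam (n + 1) := by
  rw [extA, dif_pos ⟨Finset.mem_Icc.mpr ⟨h1, by omega⟩, fun h => by simpa using h.2,
    fun h => by omega⟩]
  rfl

/- ### the main construction -/

lemma main_lemma (P Q : ℤ) (hP : Odd P) (hQ : 0 < Q) (hgcd : Int.gcd P Q = 1)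
    (lam : ℂ) (hl : lam ^ 4 = 1) :
    ∃ v : Idx Q → ℂ, v ≠ 0 ∧ (Mmat P Q).mulVec v = lam • v := by
  have hs := s_sq P Q hP hQ
  refine ⟨vvA P Q lam, ?_, ?_⟩
  · intro h0
    have hmem : (-Q + 1) ∈ Finset.Icc (-Q) Q := Finset.mem_Icc.mpr ⟨by omega, by omega⟩
    set i0 : Idx Q := ⟨⟨⟨-Q + 1, hmem⟩, false⟩,
      ⟨by rintro ⟨h, -⟩; exact absurd (show -Q + 1 = -Q from h) (by omega),
       by rintro ⟨-, h⟩; exact absurd h (by simp)⟩⟩ with hi0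
    have h1 := congrFun h0 i0
    have h2 : vvA P Q lam i0 = avec P Q lam (Q + (-Q + 1)).toNat := rfl
    rw [show (Q + (-Q + 1)).toNat = 1 by omega] at h2
    rw [h2] at h1
    simp [avec] at h1
  · funext i
    rw [mulVec_eq]
    obtain ⟨⟨⟨n, hn⟩, b⟩, hex⟩ := i
    have hmem := Finset.mem_Icc.mp hn
    simp only [Pi.smul_apply, smul_eq_mul]
    cases b
    · -- b = false : n ∈ [-Q+1, Q]
      have hne : n ≠ -Q := fun h => hex.1 ⟨h, rfl⟩
      rw [if_pos rfl]
      have hvv : vvA P Q lam ⟨⟨⟨n, hn⟩, false⟩, hex⟩ = aInt P Q lam n := rfl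
      show _ = lam * vvA P Q lam ⟨⟨⟨n, hn⟩, false⟩, hex⟩
      rw [hvv]
      rw [ext_true P Q lam (n - 1) (by omega) (by omega),
        show n - 1 + 1 = n by ring]
      by_cases hnQ : n = Q
      · subst hnQ
        rw [cc_Q_eq P n hP hQ, ss_Q_eq P n, eps_Qsub1 P n lam hl hQ]
        linear_combination (lam * aInt P n lam n) * hs
      · rw [ext_false P Q lam (n + 1) (by omega) (by omega)]
        have hrec := arec P Q lam hQ hgcd n (by omega) (by omega)
        linear_combination hrec
    · -- b = true : n ∈ [-Q, Q-1]
      have hne : n ≠ Q := fun h => hex.2 ⟨h, rfl⟩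
      rw [if_neg (by simp)]
      have hvv : vvA P Q lam ⟨⟨⟨n, hn⟩, true⟩, hex⟩
          = epsA P Q lam n * aInt P Q lam (n + 1) := rfl
      show _ = lam * vvA P Q lam ⟨⟨⟨n, hn⟩, true⟩, hex⟩
      rw [hvv]
      rw [ext_false P Q lam (n + 1) (by omega) (by omega)]
      by_cases hnQ : n = -Q
      · subst hnQ
        rw [cc_negQ_eq P Q hP hQ, eps_negQ]
        linear_combination (-(ssA P Q (-Q) * aInt P Q lam (-Q + 1))) * hl
      · rw [ext_true P Q lam (n - 1) (by omega) (by omega),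
          show n - 1 + 1 = n by ring]
        have hrec := arec P Q lam hQ hgcd n (by omega) (by omega)
        have hE1 : epsA P Q lam n = lam ^ 2 * epsA P Q lam (n - 1) :=
          eps_step P Q lam n (by omega)
        have hE2 := eps_mul P Q lam hl hs n (by omega)
        have hpy := pyth P Q n
        have hcc := cc_ne P Q hQ hgcd n (by omega) (by omega)
        apply mul_left_cancel₀ hcc
        linear_combination (ssA P Q n - lam * epsA P Q lam n) * hrec
          + (-(lam ^ 2) * aInt P Q lam n) * hE1
          + (-(lam * ssA P Q n) * aInt P Q lam n) * hE2
          + (epsA P Q lam (n - 1) * aInt P Q lam n) * hpy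
          + (-(epsA P Q lam (n - 1)) * aInt P Q lam n) * hl

/-- Each of `1, -1, i, -i` is an eigenvalue of the restricted `CW` walk
matrix. -/
theorem Mmat_special_eigenvalues (P Q : ℤ) (hP : Odd P) (hQ : 0 < Q)
    (hgcd : Int.gcd P Q = 1) :
    ∀ lam : ℂ, lam = 1 ∨ lam = -1 ∨ lam = Complex.I ∨ lam = -Complex.I →
      ∃ v : Idx Q → ℂ, v ≠ 0 ∧ (Mmat P Q).mulVec v = lam • v := by
  rintro lam (rfl | rfl | rfl | rfl) <;> apply main_lemma P Q hP hQ hgcd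
  · norm_num
  · norm_num
  · exact Complex.I_pow_four
  · rw [show (-Complex.I) ^ 4 = Complex.I ^ 4 by ring]; exact Complex.I_pow_four
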